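/- arXiv:2605.06123 — 2 statements merged into one kernel-verified Lean document; each statement's English description precedes it below -/
import Mathlib

section
/- Let P be a probability distribution on an instance space X, let the per-instance loss satisfy 0 ≤ ℓ(θ; x) ≤ 1 for every θ ∈ Θ and P-almost every x, let D = (x_1, …, x_n) be an i.i.d. sample from P^n, and let A = A(D) be any data-dependent random variable taking values in Θ. Then for every λ > 0, the mutual information satisfies I(A; D) ≥ λ · E[ L_P(A) − L̂_D(A) ] − λ² / (8n); consequently, E[ L_P(A) − L̂_D(A) ] ≤ I(A; D)/λ + λ/(8n) for every λ > 0. -/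
open MeasureTheory ProbabilityTheory
open scoped ENNReal

open Classical in
/-- The Kullback–Leibler divergence between two measures, valued in `ℝ≥0∞`:
it is `∫ log (dμ/dν) dμ` when `μ ≪ ν` and the log-likelihood ratio is integrable,
and `∞` otherwise. -/
noncomputable def klDiv {α : Type*} [MeasurableSpace α] (μ ν : Measure α) : ℝ≥0∞ :=
  if μ ≪ ν ∧ Integrable (llr μ ν) μ then ENNReal.ofReal (∫ x, llr μ ν x ∂μ) else ⊤

/-- The mutual information `I(U; V)` between two random variables: the KL divergence
between their joint law and the product of their marginal laws. -/
noncomputable def mutualInfo {Ω α β : Type*} [MeasurableSpace Ω] [MeasurableSpace α]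
    [MeasurableSpace β] (μ : Measure Ω) (U : Ω → α) (V : Ω → β) : ℝ≥0∞ :=
  klDiv (μ.map fun ω => (U ω, V ω)) ((μ.map U).prod (μ.map V))

/-!
By the Donsker–Varadhan inequality, `∫ f dπ - log ∫ exp f dρ ≤ KL(π ‖ ρ)` for probability
measures `π`, `ρ` and bounded `f`; it is Gibbs' inequality `KL(π ‖ ρ.tilted f) ≥ 0` rewritten.
Take `π` the joint law of `(A, D)`, `ρ` the product of its marginals and
`f (θ, d) = λ (L_P(θ) - L̂_d(θ))`. Under `ρ` the sample is independent of `θ` and i.i.d. `P`, so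
by Hoeffding's lemma and independence the gap is `1/(4n)`-sub-Gaussian for every `θ`, and
`log ∫ exp f dρ ≤ λ² / (8n)`. Dividing by `λ` gives the second inequality.
-/

open Real
open scoped NNReal

theorem integral_sub_log_integral_exp_le_integral_llr {α : Type*} [MeasurableSpace α]
    {μ ν : Measure α} [IsProbabilityMeasure μ] [IsProbabilityMeasure ν] {f : α → ℝ}
    (hμν : μ ≪ ν) (h_int : Integrable (llr μ ν) μ) (hfμ : Integrable f μ)
    (hfν : Integrable (fun x ↦ exp (f x)) ν) :
    ∫ x, f x ∂μ - log (∫ x, exp (f x) ∂ν) ≤ ∫ x, llr μ ν x ∂μ := by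
  have : IsProbabilityMeasure (ν.tilted f) := isProbabilityMeasure_tilted hfν
  have hgibbs := InformationTheory.integral_llr_add_sub_measure_univ_nonneg
    (hμν.trans (absolutelyContinuous_tilted hfν))
    (integrable_llr_tilted_right hμν hfμ h_int hfν)
  rw [integral_llr_tilted_right hμν hfμ hfν h_int] at hgibbs
  simp only [probReal_univ] at hgibbs
  linarith

theorem integrable_exp_of_ae_abs_le {α : Type*} [MeasurableSpace α] {μ : Measure α}
    [IsFiniteMeasure μ] {f : α → ℝ} {C : ℝ} (hf : AEMeasurable f μ)
    (hC : ∀ᵐ x ∂μ, |f x| ≤ C) : Integrable (fun x ↦ exp (f x)) μ :=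
  .of_mem_Icc 0 (exp C) hf.exp <| hC.mono fun _ hx ↦
    ⟨(exp_pos _).le, exp_le_exp.2 ((le_abs_self _).trans hx)⟩

theorem ofReal_integral_sub_log_integral_exp_le_klDiv {α : Type*} [MeasurableSpace α]
    {μ ν : Measure α} [IsProbabilityMeasure μ] [IsProbabilityMeasure ν] {f : α → ℝ} {C : ℝ}
    (hf : Measurable f) (hC : ∀ᵐ x ∂ν, |f x| ≤ C) :
    ENNReal.ofReal (∫ x, f x ∂μ - log (∫ x, exp (f x) ∂ν)) ≤ klDiv μ ν := by
  unfold klDiv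
  split_ifs with h
  · obtain ⟨hμν, h_int⟩ := h
    have hfμ : Integrable f μ := .of_bound hf.aestronglyMeasurable C <|
      Filter.Eventually.mono (hμν.ae_le hC) fun _ hx ↦ by rwa [norm_eq_abs]
    exact ENNReal.ofReal_le_ofReal <| integral_sub_log_integral_exp_le_integral_llr hμν h_int hfμ
      (integrable_exp_of_ae_abs_le hf.aemeasurable hC)
  · exact le_top

theorem ENNReal.ofReal_le_div_add_of_ofReal_mul_sub_mul_le {x c t : ℝ} {I : ℝ≥0∞}
    (ht : 0 < t) (h : ENNReal.ofReal (t * x - t * c) ≤ I) :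
    ENNReal.ofReal x ≤ I / ENNReal.ofReal t + ENNReal.ofReal c :=
  calc ENNReal.ofReal x = ENNReal.ofReal ((t * x - t * c) / t + c) := by
        congr 1; field_simp; ring
    _ ≤ ENNReal.ofReal ((t * x - t * c) / t) + ENNReal.ofReal c := ENNReal.ofReal_add_le
    _ ≤ I / ENNReal.ofReal t + ENNReal.ofReal c := by
        rw [ENNReal.ofReal_div_of_pos ht]
        gcongr

noncomputable def generalizationGap {𝒳 : Type*} [MeasurableSpace 𝒳] (P : Measure 𝒳) {n : ℕ}
    (f : 𝒳 → ℝ) (d : Fin n → 𝒳) : ℝ :=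
  (∫ x, f x ∂P) - (∑ i, f (d i)) / n

section GeneralizationGap

variable {𝒳 : Type*} [MeasurableSpace 𝒳] {P : Measure 𝒳} [IsProbabilityMeasure P] {n : ℕ}
  {f : 𝒳 → ℝ} {a b : ℝ}

theorem hasSubgaussianMGF_generalizationGap (hn : 0 < n) (hf : Measurable f)
    (hb : ∀ᵐ x ∂P, f x ∈ Set.Icc a b) :
    HasSubgaussianMGF (generalizationGap P f) ((‖b - a‖₊ / 2) ^ 2 / n)
      (Measure.pi fun _ : Fin n => P) := by
  set Y : 𝒳 → ℝ := fun x ↦ (n : ℝ)⁻¹ * -(f x - P[f])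
  have hY : HasSubgaussianMGF Y ((n : ℝ≥0)⁻¹ ^ 2 * (‖b - a‖₊ / 2) ^ 2) P :=
    (hasSubgaussianMGF_of_mem_Icc hf.aemeasurable hb).neg.const_mul (n : ℝ)⁻¹
  have hYi (i : Fin n) : HasSubgaussianMGF (fun d : Fin n → 𝒳 ↦ Y (d i))
      ((n : ℝ≥0)⁻¹ ^ 2 * (‖b - a‖₊ / 2) ^ 2) (Measure.pi fun _ : Fin n => P) := by
    refine HasSubgaussianMGF.of_map (measurable_pi_apply i).aemeasurable (X := Y) ?_
    rwa [(measurePreserving_eval (fun _ : Fin n => P) i).map_eq]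
  have hsum := HasSubgaussianMGF.sum_of_iIndepFun
    (iIndepFun_pi (μ := fun _ : Fin n => P) fun _ ↦ hY.aemeasurable) (s := Finset.univ)
    fun i _ ↦ hYi i
  convert hsum using 1
  · ext d
    simp only [generalizationGap, Y, ← Finset.mul_sum, Finset.sum_neg_distrib,
      Finset.sum_sub_distrib, Finset.sum_const, Finset.card_univ, Fintype.card_fin, nsmul_eq_mul]
    field_simp
    ring
  · rw [Finset.sum_const, Finset.card_univ, Fintype.card_fin, nsmul_eq_mul]
    have : (n : ℝ≥0) ≠ 0 := by positivity
    field_simp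

theorem integral_mem_Icc_of_ae_mem_Icc (hf : Measurable f) (hb : ∀ᵐ x ∂P, f x ∈ Set.Icc a b) :
    ∫ x, f x ∂P ∈ Set.Icc a b := by
  have hfi : Integrable f P := .of_mem_Icc a b hf.aemeasurable hb
  constructor
  · simpa using integral_mono_ae (integrable_const a) hfi (hb.mono fun _ hx ↦ hx.1)
  · simpa using integral_mono_ae hfi (integrable_const b) (hb.mono fun _ hx ↦ hx.2)

theorem ae_abs_generalizationGap_le (hn : 0 < n) (hf : Measurable f)
    (hb : ∀ᵐ x ∂P, f x ∈ Set.Icc a b) :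
    ∀ᵐ d ∂(Measure.pi fun _ : Fin n => P), |generalizationGap P f d| ≤ b - a := by
  have hcoord : ∀ᵐ d ∂(Measure.pi fun _ : Fin n => P), ∀ i, f (d i) ∈ Set.Icc a b :=
    ae_all_iff.2 fun i ↦
      (Measure.quasiMeasurePreserving_eval (fun _ ↦ P) i).ae (p := (f · ∈ Set.Icc a b)) hb
  filter_upwards [hcoord] with d hd
  have hn' : (0 : ℝ) < n := by exact_mod_cast hn
  have hsum : (∑ i, f (d i)) / n ∈ Set.Icc a b := by
    constructor
    · rw [le_div_iff₀ hn']
      simpa [mul_comm] using Finset.sum_le_sum fun i (_ : i ∈ Finset.univ) ↦ (hd i).1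
    · rw [div_le_iff₀ hn']
      simpa [mul_comm] using Finset.sum_le_sum fun i (_ : i ∈ Finset.univ) ↦ (hd i).2
  have hmean := integral_mem_Icc_of_ae_mem_Icc hf hb
  rw [abs_le, generalizationGap]
  constructor <;> linarith [hsum.1, hsum.2, hmean.1, hmean.2]

end GeneralizationGap

section ProductMeasure

variable {𝒳 Θ : Type*} [MeasurableSpace 𝒳] [MeasurableSpace Θ] {P : Measure 𝒳}
  [IsProbabilityMeasure P] {n : ℕ} {ℓ : Θ → 𝒳 → ℝ} {a b : ℝ}

theorem measurable_generalizationGap (hℓ : Measurable (Function.uncurry ℓ)) :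
    Measurable fun p : Θ × (Fin n → 𝒳) ↦ generalizationGap P (ℓ p.1) p.2 := by
  have hmean : Measurable fun θ ↦ ∫ x, ℓ θ x ∂P :=
    hℓ.stronglyMeasurable.integral_prod_right.measurable
  have hcoord (i : Fin n) : Measurable fun p : Θ × (Fin n → 𝒳) ↦ ℓ p.1 (p.2 i) :=
    hℓ.comp (measurable_fst.prodMk ((measurable_pi_apply i).comp measurable_snd))
  exact (hmean.comp measurable_fst).sub
    ((Finset.measurable_sum _ fun i _ ↦ hcoord i).div_const _)

theorem ae_prod_abs_generalizationGap_le (ν : Measure Θ) [SFinite ν] (hn : 0 < n)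
    (hℓ : Measurable (Function.uncurry ℓ)) (hb : ∀ θ, ∀ᵐ x ∂P, ℓ θ x ∈ Set.Icc a b) :
    ∀ᵐ p ∂ν.prod (Measure.pi fun _ : Fin n => P), |generalizationGap P (ℓ p.1) p.2| ≤ b - a :=
  (Measure.ae_prod_iff_ae_ae (measurableSet_le (measurable_generalizationGap hℓ).abs
    measurable_const)).2 <| ae_of_all _ fun θ ↦
      ae_abs_generalizationGap_le hn (hℓ.comp measurable_prodMk_left) (hb θ)

theorem hasSubgaussianMGF_generalizationGap_prod (ν : Measure Θ) [IsProbabilityMeasure ν]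
    (hn : 0 < n) (hℓ : Measurable (Function.uncurry ℓ))
    (hb : ∀ θ, ∀ᵐ x ∂P, ℓ θ x ∈ Set.Icc a b) :
    HasSubgaussianMGF (fun p ↦ generalizationGap P (ℓ p.1) p.2) ((‖b - a‖₊ / 2) ^ 2 / n)
      (ν.prod (Measure.pi fun _ : Fin n => P)) := by
  have hint (t : ℝ) : Integrable (fun p ↦ exp (t * generalizationGap P (ℓ p.1) p.2))
      (ν.prod (Measure.pi fun _ : Fin n => P)) := by
    refine integrable_exp_of_ae_abs_le
      ((measurable_generalizationGap hℓ).const_mul t).aemeasurable (C := |t| * (b - a)) ?_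
    filter_upwards [ae_prod_abs_generalizationGap_le ν hn hℓ hb] with p hp
    rw [abs_mul]
    exact mul_le_mul_of_nonneg_left hp (abs_nonneg t)
  refine ⟨hint, fun t ↦ ?_⟩
  rw [mgf, integral_prod _ (hint t)]
  calc _ ≤ ∫ _, exp (((‖b - a‖₊ / 2) ^ 2 / n : ℝ≥0) * t ^ 2 / 2) ∂ν :=
        integral_mono (hint t).integral_prod_left (integrable_const _) fun θ ↦
          (hasSubgaussianMGF_generalizationGap hn (hℓ.comp measurable_prodMk_left)
            (hb θ)).mgf_le t
    _ = _ := by simp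

end ProductMeasure

/-- Donsker–Varadhan consequence: for an i.i.d. dataset `D ∼ P^n`,
a `[0,1]`-valued loss (`P`-a.e.), and any data-dependent output `A`, for every `λ > 0`,
`I(A; D) ≥ λ · E[L_P(A) − L̂_D(A)] − λ²/(8n)`, and consequently
`E[L_P(A) − L̂_D(A)] ≤ I(A; D)/λ + λ/(8n)`. -/
theorem mutualInfo_ge_and_expected_gap_le
    {Ω 𝒳 Θ : Type*} [MeasurableSpace Ω] [MeasurableSpace 𝒳] [MeasurableSpace Θ]
    (μ : Measure Ω) [IsProbabilityMeasure μ]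
    (P : Measure 𝒳) [IsProbabilityMeasure P]
    (n : ℕ) (hn : 0 < n)
    (ℓ : Θ → 𝒳 → ℝ) (hℓ : Measurable (Function.uncurry ℓ))
    (hbound : ∀ θ : Θ, ∀ᵐ x ∂P, ℓ θ x ∈ Set.Icc (0 : ℝ) 1)
    (D : Ω → Fin n → 𝒳) (hD : Measurable D)
    (hDlaw : μ.map D = Measure.pi fun _ : Fin n => P)
    (A : Ω → Θ) (hA : Measurable A) :
    ∀ lam : ℝ, 0 < lam →
      ENNReal.ofReal
          (lam * (∫ ω, ((∫ x, ℓ (A ω) x ∂P) - (∑ i, ℓ (A ω) (D ω i)) / n) ∂μ)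
            - lam ^ 2 / (8 * n))
        ≤ mutualInfo μ A D
      ∧
      ENNReal.ofReal
          (∫ ω, ((∫ x, ℓ (A ω) x ∂P) - (∑ i, ℓ (A ω) (D ω i)) / n) ∂μ)
        ≤ mutualInfo μ A D / ENNReal.ofReal lam + ENNReal.ofReal (lam / (8 * n)) := by
  intro lam hlam
  have hAD : Measurable fun ω ↦ (A ω, D ω) := hA.prodMk hD
  have : IsProbabilityMeasure (μ.map A) := Measure.isProbabilityMeasure_map hA.aemeasurable
  have : IsProbabilityMeasure (μ.map D) := Measure.isProbabilityMeasure_map hD.aemeasurable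
  have : IsProbabilityMeasure (μ.map fun ω ↦ (A ω, D ω)) :=
    Measure.isProbabilityMeasure_map hAD.aemeasurable
  have hG := (measurable_generalizationGap (P := P) (n := n) hℓ).const_mul lam
  have hmean : ∫ p, lam * generalizationGap P (ℓ p.1) p.2 ∂μ.map (fun ω ↦ (A ω, D ω))
      = lam * ∫ ω, ((∫ x, ℓ (A ω) x ∂P) - (∑ i, ℓ (A ω) (D ω i)) / n) ∂μ := by
    rw [integral_map hAD.aemeasurable hG.aestronglyMeasurable, integral_const_mul]
    rfl
  -- The loss bound transfers to the product of the marginals, not to the joint law of `(A, D)`.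
  have hbound_prod : ∀ᵐ p ∂(μ.map A).prod (μ.map D),
      |lam * generalizationGap P (ℓ p.1) p.2| ≤ lam := by
    rw [hDlaw]
    filter_upwards [ae_prod_abs_generalizationGap_le (μ.map A) hn hℓ hbound] with p hp
    rw [abs_mul, abs_of_pos hlam]
    simpa using mul_le_mul_of_nonneg_left hp hlam.le
  have hcgf :
      log (∫ p, exp (lam * generalizationGap P (ℓ p.1) p.2) ∂(μ.map A).prod (μ.map D))
        ≤ lam ^ 2 / (8 * n) := by
    rw [hDlaw]
    convert (hasSubgaussianMGF_generalizationGap_prod (μ.map A) hn hℓ hbound).cgf_le lam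
      using 1
    · rfl
    · push_cast
      rw [sub_zero, norm_one]
      ring
  have hgap_le : ENNReal.ofReal
      (lam * (∫ ω, ((∫ x, ℓ (A ω) x ∂P) - (∑ i, ℓ (A ω) (D ω i)) / n) ∂μ) - lam ^ 2 / (8 * n))
        ≤ mutualInfo μ A D :=
    le_trans (ENNReal.ofReal_le_ofReal (by linarith))
      (ofReal_integral_sub_log_integral_exp_le_klDiv hG hbound_prod)
  refine ⟨hgap_le, ENNReal.ofReal_le_div_add_of_ofReal_mul_sub_mul_le hlam ?_⟩
  convert hgap_le using 3
  field_simp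
end

section
/- (Proposition 1, top-down bound.) Let P be a probability distribution on an instance space X, let the per-instance loss satisfy 0 ≤ ℓ(θ; x) ≤ 1 for every θ ∈ Θ and P-almost every x, and let D ∼ P^n be an i.i.d. dataset. Let κ : Θ → K be an abstraction map and g : K → Θ a measurable realization map satisfying κ(g(K)) = K for all K ∈ K, and define the distortion δ_P(g, κ) := sup_{θ ∈ Θ} ( L_P(g(κ(θ))) − L_P(θ) ). Assume the population risk attains its infimum L_P* := inf_{θ ∈ Θ} L_P(θ) at some θ* ∈ Θ. Let K̂ be a (possibly randomized) data-dependent knowledge state satisfying K̂ ∈ argmin_{K ∈ K} L̂_D(g(K)), and set θ̂_TD := g(K̂). Then E[ L_P(θ̂_TD) ] − L_P* ≤ δ_P(g, κ) + sqrt( I(K̂; D) / (2n) ). -/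
open MeasureTheory ProbabilityTheory
open scoped ENNReal

/-!
The excess risk splits as
`E[L(g K̂)] - L(θ*) = E[L(g K̂) - L̂(g K̂)] + (E[L̂(g K̂)] - L(g (κ θ*))) + (L(g (κ θ*)) - L(θ*))`.
The middle term is `≤ 0` because `K̂` minimises the empirical risk and `L̂(g (κ θ*))` is an unbiased
estimate of `L(g (κ θ*))`; the last term is at most the distortion. The first term, the expected
generalization gap, is bounded as in Xu–Raginsky: by Hoeffding's lemma the gap `L(g K) - L̂_d(g K)`
is sub-Gaussian with variance proxy `1 / (4n)` under the product `law(K̂) ⊗ Pⁿ` of the marginals,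
and the Donsker–Varadhan inequality transfers this to the joint law `law(K̂, D)` at the price of
`KL(law(K̂, D) ‖ law(K̂) ⊗ Pⁿ) = I(K̂; D)`, giving `√(I(K̂; D) / (2n))` after optimising over the
exponent.
-/

open scoped NNReal

section KLDivergence

open Real

variable {α : Type*} [MeasurableSpace α] {μ ν : Measure α}

lemma klDiv_ne_top_iff : klDiv μ ν ≠ ⊤ ↔ μ ≪ ν ∧ Integrable (llr μ ν) μ := by
  classical
  unfold klDiv
  split_ifs with h <;> simp [h]

lemma klDiv_of_ac_of_integrable (hμν : μ ≪ ν) (hllr : Integrable (llr μ ν) μ) :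
    klDiv μ ν = ENNReal.ofReal (∫ x, llr μ ν x ∂μ) := by
  classical
  exact if_pos ⟨hμν, hllr⟩

lemma integral_llr_nonneg [IsProbabilityMeasure μ] [IsProbabilityMeasure ν] (hμν : μ ≪ ν)
    (hllr : Integrable (llr μ ν) μ) : 0 ≤ ∫ x, llr μ ν x ∂μ := by
  simpa using InformationTheory.integral_llr_add_sub_measure_univ_nonneg hμν hllr

/-- The Donsker–Varadhan inequality: Gibbs' inequality for `μ` against the tilted measure
`ν.tilted f`. -/
lemma integral_le_integral_llr_add_log_integral_exp [IsProbabilityMeasure μ]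
    [IsProbabilityMeasure ν] (hμν : μ ≪ ν) (hllr : Integrable (llr μ ν) μ) {f : α → ℝ}
    (hfμ : Integrable f μ) (hfν : Integrable (fun x ↦ exp (f x)) ν) :
    ∫ x, f x ∂μ ≤ ∫ x, llr μ ν x ∂μ + log (∫ x, exp (f x) ∂ν) := by
  have : IsProbabilityMeasure (ν.tilted f) := isProbabilityMeasure_tilted hfν
  have hgibbs := integral_llr_nonneg (hμν.trans (absolutelyContinuous_tilted hfν))
    (integrable_llr_tilted_right hμν hfμ hllr hfν)
  rw [integral_llr_tilted_right hμν hfμ hfν hllr] at hgibbs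
  linarith

lemma le_sqrt_of_forall_mul_le {a k c : ℝ} (hk : 0 ≤ k) (hc : 0 ≤ c)
    (h : ∀ t > 0, t * a ≤ k + c * t ^ 2 / 2) : a ≤ √(2 * c * k) := by
  rcases le_or_gt a 0 with ha | ha
  · exact ha.trans (sqrt_nonneg _)
  rcases hc.eq_or_lt with rfl | hc
  · have := h ((k + 1) / a) (by positivity)
    rw [div_mul_cancel₀ _ ha.ne'] at this
    linarith
  · have := h (a / c) (by positivity)
    refine le_sqrt_of_sq_le ?_
    field_simp at this
    nlinarith

theorem integral_le_sqrt_of_hasSubgaussianMGF [IsProbabilityMeasure μ] [IsProbabilityMeasure ν]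
    (hμν : μ ≪ ν) (hllr : Integrable (llr μ ν) μ) {f : α → ℝ} {c : ℝ≥0}
    (hfμ : Integrable f μ) (hf : HasSubgaussianMGF f c ν) :
    ∫ x, f x ∂μ ≤ √(2 * c * ∫ x, llr μ ν x ∂μ) := by
  refine le_sqrt_of_forall_mul_le (integral_llr_nonneg hμν hllr) c.2 fun t _ ↦ ?_
  rw [← integral_const_mul]
  calc ∫ x, t * f x ∂μ ≤ ∫ x, llr μ ν x ∂μ + cgf f ν t :=
        integral_le_integral_llr_add_log_integral_exp hμν hllr (hfμ.const_mul t)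
          (hf.integrable_exp_mul t)
    _ ≤ ∫ x, llr μ ν x ∂μ + c * t ^ 2 / 2 := by gcongr; exact hf.cgf_le t

end KLDivergence

lemma ENNReal.ofReal_sqrt_div {a b : ℝ} (ha : 0 ≤ a) (hb : 0 < b) :
    ENNReal.ofReal √(a / b) = (ENNReal.ofReal a / ENNReal.ofReal b) ^ (1 / 2 : ℝ) := by
  rw [Real.sqrt_eq_rpow, ← ENNReal.ofReal_div_of_pos hb,
    ENNReal.ofReal_rpow_of_nonneg (div_nonneg ha hb.le) one_half_pos.le]

lemma integral_mem_Icc_of_ae {α : Type*} [MeasurableSpace α] {μ : Measure α}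
    [IsProbabilityMeasure μ] {X : α → ℝ} {a b : ℝ} (hX : AEMeasurable X μ)
    (h : ∀ᵐ x ∂μ, X x ∈ Set.Icc a b) : ∫ x, X x ∂μ ∈ Set.Icc a b :=
  (convex_Icc a b).integral_mem isClosed_Icc h (Integrable.of_mem_Icc a b hX h)

section Product

open Real

variable {β γ : Type*} [MeasurableSpace β] [MeasurableSpace γ]

lemma MeasureTheory.Measure.AbsolutelyContinuous.ae_of_forall_ae_prod {J : Measure (β × γ)}
    {ρ : Measure β} {ν : Measure γ} [SFinite ν] (hJ : J ≪ ρ.prod ν) {p : β × γ → Prop}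
    (hp : MeasurableSet {z | p z}) (h : ∀ b, ∀ᵐ y ∂ν, p (b, y)) : ∀ᵐ z ∂J, p z :=
  hJ.ae_le ((Measure.ae_prod_iff_ae_ae hp).2 (ae_of_all _ h))

lemma hasSubgaussianMGF_prod_of_forall {ρ : Measure β} {ν : Measure γ} [IsProbabilityMeasure ρ]
    [IsProbabilityMeasure ν] {f : β × γ → ℝ} {c : ℝ≥0}
    (hf : AEStronglyMeasurable f (ρ.prod ν))
    (h : ∀ b, HasSubgaussianMGF (fun y ↦ f (b, y)) c ν) : HasSubgaussianMGF f c (ρ.prod ν) := by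
  have hexp (t : ℝ) : AEStronglyMeasurable (fun z ↦ exp (t * f z)) (ρ.prod ν) := by fun_prop
  have hint (t : ℝ) : Integrable (fun z ↦ exp (t * f z)) (ρ.prod ν) := by
    refine (integrable_prod_iff (hexp t)).2 ⟨ae_of_all _ fun b ↦ (h b).integrable_exp_mul t, ?_⟩
    refine Integrable.of_mem_Icc 0 (exp (c * t ^ 2 / 2))
      (hexp t).norm.integral_prod_right'.aemeasurable (ae_of_all _ fun b ↦ ?_)
    simp only [norm_eq_abs, abs_exp]
    exact ⟨integral_nonneg fun _ ↦ (exp_pos _).le, (h b).mgf_le t⟩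
  refine ⟨hint, fun t ↦ ?_⟩
  calc mgf f (ρ.prod ν) t = ∫ b, mgf (fun y ↦ f (b, y)) ν t ∂ρ := integral_prod _ (hint t)
    _ ≤ ∫ _, exp (c * t ^ 2 / 2) ∂ρ :=
        integral_mono (hint t).integral_prod_left (integrable_const _) fun b ↦ (h b).mgf_le t
    _ = exp (c * t ^ 2 / 2) := by simp

end Product

noncomputable def sampleMean {𝒳 : Type*} {n : ℕ} (X : 𝒳 → ℝ) (d : Fin n → 𝒳) : ℝ :=
  (∑ i, X (d i)) / n

lemma sampleMean_mem_Icc {𝒳 : Type*} {n : ℕ} (hn : 0 < n) {X : 𝒳 → ℝ} {a b : ℝ}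
    {d : Fin n → 𝒳} (h : ∀ i, X (d i) ∈ Set.Icc a b) : sampleMean X d ∈ Set.Icc a b := by
  have hn' : (0 : ℝ) < n := Nat.cast_pos.2 hn
  have hlo : n * a ≤ ∑ i, X (d i) := by
    simpa using Finset.sum_le_sum fun i (_ : i ∈ Finset.univ) ↦ (h i).1
  have hhi : ∑ i, X (d i) ≤ n * b := by
    simpa using Finset.sum_le_sum fun i (_ : i ∈ Finset.univ) ↦ (h i).2
  exact ⟨(le_div_iff₀' hn').2 hlo, (div_le_iff₀' hn').2 hhi⟩

section SampleMean

variable {𝒳 𝒦 : Type*} [MeasurableSpace 𝒳] [MeasurableSpace 𝒦] {P : Measure 𝒳}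
  [IsProbabilityMeasure P] {n : ℕ}

lemma measurable_sampleMean {f : 𝒦 → 𝒳 → ℝ} (hf : Measurable (Function.uncurry f)) :
    Measurable fun p : 𝒦 × (Fin n → 𝒳) ↦ sampleMean (f p.1) p.2 :=
  Finset.measurable_sum _ (fun i _ ↦ hf.comp (measurable_fst.prodMk
    ((measurable_pi_apply i).comp measurable_snd))) |>.div_const _

lemma ae_forall_apply_pi {p : 𝒳 → Prop} (h : ∀ᵐ x ∂P, p x) :
    ∀ᵐ d ∂(Measure.pi fun _ : Fin n ↦ P), ∀ i, p (d i) :=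
  ae_all_iff.2 fun i ↦ (measurePreserving_eval (fun _ : Fin n ↦ P) i).quasiMeasurePreserving.ae h

lemma integrable_sampleMean {X : 𝒳 → ℝ} (hX : Integrable X P) :
    Integrable (sampleMean X) (Measure.pi fun _ : Fin n ↦ P) :=
  (integrable_finsetSum _ fun i _ ↦
    (measurePreserving_eval (fun _ : Fin n ↦ P) i).integrable_comp_of_integrable hX).div_const _

lemma integral_sampleMean (hn : 0 < n) {X : 𝒳 → ℝ} (hX : Integrable X P) :
    ∫ d, sampleMean X d ∂(Measure.pi fun _ : Fin n ↦ P) = ∫ x, X x ∂P := by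
  have heval (i : Fin n) := measurePreserving_eval (fun _ : Fin n ↦ P) i
  have hcoord (i : Fin n) : ∫ d, X (d i) ∂(Measure.pi fun _ : Fin n ↦ P) = ∫ x, X x ∂P := by
    rw [← integral_map (heval i).measurable.aemeasurable
      (by rw [(heval i).map_eq]; exact hX.aestronglyMeasurable), (heval i).map_eq]
  have hint (i : Fin n) : Integrable (fun d ↦ X (d i)) (Measure.pi fun _ : Fin n ↦ P) :=
    (heval i).integrable_comp_of_integrable hX
  unfold sampleMean
  rw [integral_div, integral_finsetSum _ fun i _ ↦ hint i]
  simp only [hcoord, Finset.sum_const, Finset.card_univ, Fintype.card_fin, nsmul_eq_mul]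
  field_simp

lemma hasSubgaussianMGF_integral_sub_sampleMean (hn : 0 < n) {X : 𝒳 → ℝ} {a b : ℝ}
    (hX : AEMeasurable X P) (hab : ∀ᵐ x ∂P, X x ∈ Set.Icc a b) :
    HasSubgaussianMGF (fun d ↦ ∫ x, X x ∂P - sampleMean X d) ((‖b - a‖₊ / 2) ^ 2 / n)
      (Measure.pi fun _ : Fin n ↦ P) := by
  have hcoord (i : Fin n) : HasSubgaussianMGF (fun d : Fin n → 𝒳 ↦ X (d i) - ∫ x, X x ∂P)
      ((‖b - a‖₊ / 2) ^ 2) (Measure.pi fun _ ↦ P) := by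
    have heval := measurePreserving_eval (fun _ : Fin n ↦ P) i
    refine HasSubgaussianMGF.of_map (X := fun x ↦ X x - ∫ x, X x ∂P)
      heval.measurable.aemeasurable ?_
    rw [heval.map_eq]
    exact hasSubgaussianMGF_of_mem_Icc hX hab
  have hsum := (HasSubgaussianMGF.sum_of_iIndepFun (s := Finset.univ)
    (iIndepFun_pi (Ω := fun _ : Fin n ↦ 𝒳) (μ := fun _ ↦ P)
      (X := fun _ x ↦ X x - ∫ x, X x ∂P) fun _ ↦ hX.sub_const _)
    fun i _ ↦ hcoord i).const_mul (-(n : ℝ)⁻¹)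
  convert hsum using 1
  · ext d
    simp only [sampleMean, Finset.sum_sub_distrib, Finset.sum_const, Finset.card_univ,
      Fintype.card_fin, nsmul_eq_mul]
    field_simp
    ring
  · rw [← NNReal.coe_inj]
    simp only [Finset.sum_const, Finset.card_univ, Fintype.card_fin, nsmul_eq_mul]
    show ((‖b - a‖₊ : ℝ) / 2) ^ 2 / n = (-(n : ℝ)⁻¹) ^ 2 * (n * ((‖b - a‖₊ : ℝ) / 2) ^ 2)
    field_simp

end SampleMean

section Generalization

open Real

variable {Ω 𝒳 𝒦 : Type*} [MeasurableSpace Ω] [MeasurableSpace 𝒳] {P : Measure 𝒳}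
  [IsProbabilityMeasure P] {n : ℕ} {f : 𝒦 → 𝒳 → ℝ}

lemma integral_le_add_integral_sub_sampleMean {μ : Measure Ω} (hn : 0 < n)
    {D : Ω → Fin n → 𝒳} (hD : Measurable D) (hDlaw : μ.map D = Measure.pi fun _ ↦ P)
    {Khat : Ω → 𝒦} (K : 𝒦) (hmin : ∀ ω, sampleMean (f (Khat ω)) (D ω) ≤ sampleMean (f K) (D ω))
    (hfK : Integrable (f K) P) (hrisk : Integrable (fun ω ↦ ∫ x, f (Khat ω) x ∂P) μ)
    (hemp : Integrable (fun ω ↦ sampleMean (f (Khat ω)) (D ω)) μ) :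
    ∫ ω, ∫ x, f (Khat ω) x ∂P ∂μ
      ≤ ∫ x, f K x ∂P + ∫ ω, (∫ x, f (Khat ω) x ∂P - sampleMean (f (Khat ω)) (D ω)) ∂μ := by
  have hempK_map : Integrable (sampleMean (f K)) (μ.map D) := hDlaw ▸ integrable_sampleMean hfK
  have hempK : Integrable (fun ω ↦ sampleMean (f K) (D ω)) μ :=
    (integrable_map_measure hempK_map.aestronglyMeasurable hD.aemeasurable).1 hempK_map
  have hmean : ∫ ω, sampleMean (f K) (D ω) ∂μ = ∫ x, f K x ∂P := by
    rw [← integral_map hD.aemeasurable hempK_map.aestronglyMeasurable, hDlaw,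
      integral_sampleMean hn hfK]
  have hmono := integral_mono hemp hempK hmin
  rw [integral_sub hrisk hemp]
  linarith

variable [MeasurableSpace 𝒦]

lemma ae_sampleMean_mem_Icc {J : Measure (𝒦 × (Fin n → 𝒳))} {ρ : Measure 𝒦}
    (hJ : J ≪ ρ.prod (Measure.pi fun _ ↦ P)) (hn : 0 < n) (hf : Measurable (Function.uncurry f))
    {a b : ℝ} (hab : ∀ K, ∀ᵐ x ∂P, f K x ∈ Set.Icc a b) :
    ∀ᵐ p ∂J, sampleMean (f p.1) p.2 ∈ Set.Icc a b :=
  hJ.ae_of_forall_ae_prod (measurable_sampleMean hf measurableSet_Icc) fun K ↦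
    (ae_forall_apply_pi (hab K)).mono fun _ ↦ sampleMean_mem_Icc hn

lemma measurable_integral_sub_sampleMean (hf : Measurable (Function.uncurry f)) :
    Measurable fun p : 𝒦 × (Fin n → 𝒳) ↦ ∫ x, f p.1 x ∂P - sampleMean (f p.1) p.2 :=
  (hf.stronglyMeasurable.integral_prod_right'.measurable.comp measurable_fst).sub
    (measurable_sampleMean hf)

theorem integral_sub_sampleMean_le_sqrt {J : Measure (𝒦 × (Fin n → 𝒳))} {ρ : Measure 𝒦}
    [IsProbabilityMeasure J] [IsProbabilityMeasure ρ] (hJ : J ≪ ρ.prod (Measure.pi fun _ ↦ P))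
    (hllr : Integrable (llr J (ρ.prod (Measure.pi fun _ ↦ P))) J) (hn : 0 < n)
    (hf : Measurable (Function.uncurry f)) {a b : ℝ} (hab : ∀ K, ∀ᵐ x ∂P, f K x ∈ Set.Icc a b) :
    ∫ p, (∫ x, f p.1 x ∂P - sampleMean (f p.1) p.2) ∂J
      ≤ √((b - a) ^ 2 * (∫ p, llr J (ρ.prod (Measure.pi fun _ ↦ P)) p ∂J) / (2 * n)) := by
  have hgap := measurable_integral_sub_sampleMean (P := P) (n := n) hf
  have hbdd : ∀ᵐ p ∂J, ∫ x, f p.1 x ∂P - sampleMean (f p.1) p.2 ∈ Set.Icc (a - b) (b - a) := by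
    filter_upwards [ae_sampleMean_mem_Icc hJ hn hf hab] with p hp
    have hL := integral_mem_Icc_of_ae hf.of_uncurry_left.aemeasurable (hab p.1)
    constructor <;> linarith [hL.1, hL.2, hp.1, hp.2]
  have hsg := hasSubgaussianMGF_prod_of_forall (ρ := ρ) hgap.aestronglyMeasurable fun K ↦
    hasSubgaussianMGF_integral_sub_sampleMean hn hf.of_uncurry_left.aemeasurable (hab K)
  convert integral_le_sqrt_of_hasSubgaussianMGF hJ hllr
    (Integrable.of_mem_Icc _ _ hgap.aemeasurable hbdd) hsg using 2
  rw [NNReal.coe_div, NNReal.coe_pow, NNReal.coe_div, coe_nnnorm, Real.norm_eq_abs, div_pow,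
    sq_abs]
  push_cast
  ring

theorem ofReal_integral_sub_le_rpow_mutualInfo {μ : Measure Ω} [IsProbabilityMeasure μ]
    (hn : 0 < n) (hf : Measurable (Function.uncurry f))
    (hf01 : ∀ K, ∀ᵐ x ∂P, f K x ∈ Set.Icc 0 1) {D : Ω → Fin n → 𝒳} (hD : Measurable D)
    (hDlaw : μ.map D = Measure.pi fun _ ↦ P) {Khat : Ω → 𝒦} (hKhat : Measurable Khat) (K : 𝒦)
    (hmin : ∀ ω, sampleMean (f (Khat ω)) (D ω) ≤ sampleMean (f K) (D ω)) :
    ENNReal.ofReal (∫ ω, ∫ x, f (Khat ω) x ∂P ∂μ - ∫ x, f K x ∂P)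
      ≤ (mutualInfo μ Khat D / (2 * n)) ^ (1 / 2 : ℝ) := by
  set J := μ.map fun ω ↦ (Khat ω, D ω)
  set Q := (μ.map Khat).prod (Measure.pi fun _ : Fin n ↦ P)
  have hMI : mutualInfo μ Khat D = klDiv J Q := by rw [mutualInfo, hDlaw]
  rcases eq_or_ne (mutualInfo μ Khat D) ⊤ with htop | htop
  · simp [htop, ENNReal.top_div_of_ne_top, ENNReal.mul_ne_top]
  obtain ⟨hJQ, hllr⟩ := klDiv_ne_top_iff.1 (hMI ▸ htop)
  have hpair : Measurable fun ω ↦ (Khat ω, D ω) := hKhat.prodMk hD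
  have : IsProbabilityMeasure J := Measure.isProbabilityMeasure_map hpair.aemeasurable
  have : IsProbabilityMeasure (μ.map Khat) := Measure.isProbabilityMeasure_map hKhat.aemeasurable
  have hrisk : Measurable fun ω ↦ ∫ x, f (Khat ω) x ∂P :=
    (hf.stronglyMeasurable.integral_prod_right' (ν := P)).measurable.comp hKhat
  have hexcess := integral_le_add_integral_sub_sampleMean hn hD hDlaw K hmin
    (Integrable.of_mem_Icc 0 1 hf.of_uncurry_left.aemeasurable (hf01 K))
    (Integrable.of_mem_Icc 0 1 hrisk.aemeasurable (ae_of_all _ fun ω ↦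
      integral_mem_Icc_of_ae hf.of_uncurry_left.aemeasurable (hf01 (Khat ω))))
    -- `f` is bounded only `P`-a.e. and `Khat` depends on `D`: the bound transfers via `J ≪ Q`
    (Integrable.of_mem_Icc 0 1 ((measurable_sampleMean hf).comp hpair).aemeasurable
      (ae_of_ae_map hpair.aemeasurable (ae_sampleMean_mem_Icc hJQ hn hf hf01)))
  have hgap := integral_sub_sampleMean_le_sqrt hJQ hllr hn hf hf01
  rw [integral_map hpair.aemeasurable (measurable_integral_sub_sampleMean hf).aestronglyMeasurable,
    sub_zero, one_pow, one_mul] at hgap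
  calc _ ≤ ENNReal.ofReal √((∫ p, llr J Q p ∂J) / (2 * n)) :=
        ENNReal.ofReal_le_ofReal (by linarith)
    _ = _ := by
        rw [hMI, klDiv_of_ac_of_integrable hJQ hllr,
          ENNReal.ofReal_sqrt_div (integral_llr_nonneg hJQ hllr) (by positivity)]
        norm_cast

end Generalization

theorem topDown_excess_risk_le_general
    {Ω 𝒳 Θ 𝒦 : Type*} [MeasurableSpace Ω] [MeasurableSpace 𝒳] [MeasurableSpace Θ]
    [MeasurableSpace 𝒦]
    (μ : Measure Ω) [IsProbabilityMeasure μ]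
    (P : Measure 𝒳) [IsProbabilityMeasure P]
    (n : ℕ) (hn : 0 < n)
    (ℓ : Θ → 𝒳 → ℝ) (hℓ : Measurable (Function.uncurry ℓ))
    (hbound : ∀ θ : Θ, ∀ᵐ x ∂P, ℓ θ x ∈ Set.Icc (0 : ℝ) 1)
    (D : Ω → Fin n → 𝒳) (hD : Measurable D)
    (hDlaw : μ.map D = Measure.pi fun _ : Fin n => P)
    (κ : Θ → 𝒦) (g : 𝒦 → Θ) (hg : Measurable g)
    (θstar : Θ)
    (Khat : Ω → 𝒦) (hKhat : Measurable Khat)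
    (hmin : ∀ ω : Ω, ∀ K : 𝒦,
      (∑ i, ℓ (g (Khat ω)) (D ω i)) / n ≤ (∑ i, ℓ (g K) (D ω i)) / n) :
    ENNReal.ofReal
        ((∫ ω, ∫ x, ℓ (g (Khat ω)) x ∂P ∂μ) - ∫ x, ℓ θstar x ∂P)
      ≤ ENNReal.ofReal (⨆ θ : Θ, ((∫ x, ℓ (g (κ θ)) x ∂P) - ∫ x, ℓ θ x ∂P))
        + (mutualInfo μ Khat D / (2 * n)) ^ (1/2 : ℝ) := by
  have hrisk (θ : Θ) : ∫ x, ℓ θ x ∂P ∈ Set.Icc 0 1 :=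
    integral_mem_Icc_of_ae hℓ.of_uncurry_left.aemeasurable (hbound θ)
  have hδ : ∫ x, ℓ (g (κ θstar)) x ∂P - ∫ x, ℓ θstar x ∂P
      ≤ ⨆ θ : Θ, ((∫ x, ℓ (g (κ θ)) x ∂P) - ∫ x, ℓ θ x ∂P) :=
    le_ciSup (f := fun θ ↦ (∫ x, ℓ (g (κ θ)) x ∂P) - ∫ x, ℓ θ x ∂P)
      ⟨1, by rintro _ ⟨θ, rfl⟩; linarith [(hrisk (g (κ θ))).2, (hrisk θ).1]⟩ θstar
  have hgen := ofReal_integral_sub_le_rpow_mutualInfo (f := fun K ↦ ℓ (g K)) hn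
    (hℓ.comp (hg.prodMap measurable_id)) (fun K ↦ hbound (g K)) hD hDlaw hKhat (κ θstar)
    fun ω ↦ hmin ω (κ θstar)
  calc _ ≤ ENNReal.ofReal ((∫ ω, ∫ x, ℓ (g (Khat ω)) x ∂P ∂μ) - ∫ x, ℓ (g (κ θstar)) x ∂P
          + ⨆ θ : Θ, ((∫ x, ℓ (g (κ θ)) x ∂P) - ∫ x, ℓ θ x ∂P)) :=
        ENNReal.ofReal_le_ofReal (by linarith)
    _ ≤ _ := ENNReal.ofReal_add_le.trans (by rw [add_comm]; gcongr)

/-- **Proposition 1, top-down bound.** With an abstraction map `κ : Θ → K`,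
a realization map `g : K → Θ` with `κ (g K) = K`, distortion
`δ_P(g, κ) = ⨆ θ, (L_P(g(κ θ)) − L_P θ)`, population minimizer `θ*`, and an empirical
minimizer `K̂` over knowledge states, the realized heuristic `θ̂_TD = g(K̂)` satisfies
`E[L_P(θ̂_TD)] − L_P* ≤ δ_P(g, κ) + √(I(K̂; D)/(2n))`. -/
theorem topDown_excess_risk_le
    {Ω 𝒳 Θ 𝒦 : Type*} [MeasurableSpace Ω] [MeasurableSpace 𝒳] [MeasurableSpace Θ]
    [MeasurableSpace 𝒦]
    (μ : Measure Ω) [IsProbabilityMeasure μ]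
    (P : Measure 𝒳) [IsProbabilityMeasure P]
    (n : ℕ) (hn : 0 < n)
    (ℓ : Θ → 𝒳 → ℝ) (hℓ : Measurable (Function.uncurry ℓ))
    (hbound : ∀ θ : Θ, ∀ᵐ x ∂P, ℓ θ x ∈ Set.Icc (0 : ℝ) 1)
    (D : Ω → Fin n → 𝒳) (hD : Measurable D)
    (hDlaw : μ.map D = Measure.pi fun _ : Fin n => P)
    (κ : Θ → 𝒦) (g : 𝒦 → Θ) (hg : Measurable g)
    (hκg : ∀ K : 𝒦, κ (g K) = K)
    (θstar : Θ) (hθstar : ∀ θ : Θ, (∫ x, ℓ θstar x ∂P) ≤ ∫ x, ℓ θ x ∂P)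
    (Khat : Ω → 𝒦) (hKhat : Measurable Khat)
    (hmin : ∀ ω : Ω, ∀ K : 𝒦,
      (∑ i, ℓ (g (Khat ω)) (D ω i)) / n ≤ (∑ i, ℓ (g K) (D ω i)) / n) :
    ENNReal.ofReal
        ((∫ ω, ∫ x, ℓ (g (Khat ω)) x ∂P ∂μ) - ∫ x, ℓ θstar x ∂P)
      ≤ ENNReal.ofReal (⨆ θ : Θ, ((∫ x, ℓ (g (κ θ)) x ∂P) - ∫ x, ℓ θ x ∂P))
        + (mutualInfo μ Khat D / (2 * n)) ^ (1/2 : ℝ) :=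
  topDown_excess_risk_le_general μ P n hn ℓ hℓ hbound D hD hDlaw κ g hg θstar Khat hKhat hmin
end
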